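/- Let X ∈ ℝ^{d_in×n}, Y ∈ ℝ^{d_out×n}, and let σ: ℝ → ℝ be applied entrywise. If σ(0) = 0, σ is differentiable at 0, and σ'(0) ≠ 0, then E_σ(r) ≤ E_id(r), i.e. the infimum over A ∈ ℝ^{r×d_in}, B ∈ ℝ^{d_out×r} of ‖Y − B σ(A X)‖_F is at most the infimum over A ∈ ℝ^{r×d_in}, B ∈ ℝ^{d_out×r} of ‖Y − B A X‖_F. -/

import Mathlib

/-!
Near `0` the activation is linear with slope `c = σ'(0) ≠ 0`, so for any linear
factorization `B * A * X` the networks with weights `ε • A` and `(ε * c)⁻¹ • B` converge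
to `B * A * X` as `ε → 0`. Hence every error `‖Y - B * A * X‖_F` is a limit of errors
achievable with `σ`, and `E_σ(r)`, being below all of those, is below their limit.
-/

open scoped BigOperators

namespace CoLA

noncomputable section

/-- Frobenius norm of a real matrix. -/
def frobNorm {m n : ℕ} (M : Matrix (Fin m) (Fin n) ℝ) : ℝ :=
  Real.sqrt (∑ i, ∑ j, (M i j) ^ 2)

/-- Entrywise application of `σ` to a matrix. -/
def entrywise (σ : ℝ → ℝ) {m n : ℕ} (M : Matrix (Fin m) (Fin n) ℝ) :
    Matrix (Fin m) (Fin n) ℝ :=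
  Matrix.of fun i j => σ (M i j)

/-- `E_σ(r)`. -/
def Esig (σ : ℝ → ℝ) {din dout n : ℕ} (X : Matrix (Fin din) (Fin n) ℝ)
    (Y : Matrix (Fin dout) (Fin n) ℝ) (r : ℕ) : ℝ :=
  ⨅ (A : Matrix (Fin r) (Fin din) ℝ), ⨅ (B : Matrix (Fin dout) (Fin r) ℝ),
    frobNorm (Y - B * entrywise σ (A * X))

/-- `E_id(r)`. -/
def Eid {din dout n : ℕ} (X : Matrix (Fin din) (Fin n) ℝ)
    (Y : Matrix (Fin dout) (Fin n) ℝ) (r : ℕ) : ℝ :=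
  ⨅ (A : Matrix (Fin r) (Fin din) ℝ), ⨅ (B : Matrix (Fin dout) (Fin r) ℝ),
    frobNorm (Y - B * A * X)

/-- The (unsorted) singular values of `M`: square roots of eigenvalues of `Mᴴ * M`. -/
def svAux {m n : ℕ} (M : Matrix (Fin m) (Fin n) ℝ) : Fin n → ℝ :=
  fun i => Real.sqrt ((Matrix.isHermitian_conjTranspose_mul_self M).eigenvalues i)

/-- Singular values of `M` sorted in non-increasing order (0-indexed). -/
def sv {m n : ℕ} (M : Matrix (Fin m) (Fin n) ℝ) : Fin n → ℝ :=
  fun i => svAux M (Tuple.sort (fun j => -(svAux M j)) i)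

/-- `k`-th largest singular value (1-indexed, `0` for `k > n`). -/
def sVal {m n : ℕ} (M : Matrix (Fin m) (Fin n) ℝ) (k : ℕ) : ℝ :=
  if h : k - 1 < n then sv M ⟨k - 1, h⟩ else 0

/-- `s_{>k}(M) = √(∑_{j>k} s_j(M)²)` (with `j` 1-indexed). -/
def sGt {m n : ℕ} (M : Matrix (Fin m) (Fin n) ℝ) (k : ℕ) : ℝ :=
  Real.sqrt (∑ j : Fin n, if k ≤ (j : ℕ) then (sv M j) ^ 2 else 0)

/-- Spectral (ℓ²-operator) norm of a real matrix. -/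
def specNorm {m n : ℕ} (M : Matrix (Fin m) (Fin n) ℝ) : ℝ :=
  ‖LinearMap.toContinuousLinearMap (Matrix.toEuclideanLin M)‖

/-- Effective rank `r_α(M)`: the least `k` with `∑_{i≤k} s_i² ≥ α ∑_i s_i²`. -/
def effRank {m n : ℕ} (M : Matrix (Fin m) (Fin n) ℝ) (α : ℝ) : ℕ :=
  sInf {k : ℕ |
    α * ∑ i : Fin n, (sv M i) ^ 2 ≤ ∑ i : Fin n, if (i : ℕ) < k then (sv M i) ^ 2 else 0}

/-- Row space of `X` inside `Fin n → ℝ`. -/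
def rowSpace {d n : ℕ} (X : Matrix (Fin d) (Fin n) ℝ) : Submodule ℝ (Fin n → ℝ) :=
  Submodule.span ℝ (Set.range X)

/-- Row space of `X` as a submodule of Euclidean space. -/
def rowSpaceE {d n : ℕ} (X : Matrix (Fin d) (Fin n) ℝ) :
    Submodule ℝ (EuclideanSpace ℝ (Fin n)) :=
  Submodule.span ℝ (Set.range fun i => (WithLp.equiv 2 (Fin n → ℝ)).symm (X i))

/-- Row-wise orthogonal projection of the rows of `Y` onto the subspace `S`. -/
def projRows {dout n : ℕ} (S : Submodule ℝ (EuclideanSpace ℝ (Fin n)))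
    (Y : Matrix (Fin dout) (Fin n) ℝ) : Matrix (Fin dout) (Fin n) ℝ :=
  Matrix.of fun i => WithLp.equiv 2 (Fin n → ℝ)
    ((S.orthogonalProjectionOnto ((WithLp.equiv 2 (Fin n → ℝ)).symm (Y i)) :
      EuclideanSpace ℝ (Fin n)))

/-- Row-wise orthogonal projection onto the orthogonal complement of `span{v}`. -/
def projVperp {dout n : ℕ} (v : Fin n → ℝ) (Y : Matrix (Fin dout) (Fin n) ℝ) :
    Matrix (Fin dout) (Fin n) ℝ :=
  projRows (Submodule.span ℝ {(WithLp.equiv 2 (Fin n → ℝ)).symm v})ᗮ Y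


open Filter Topology

theorem _root_.HasDerivAt.tendsto_inv_mul_comp_mul {σ : ℝ → ℝ} {c : ℝ}
    (hσ : HasDerivAt σ c 0) (hσ0 : σ 0 = 0) (t : ℝ) :
    Tendsto (fun ε : ℝ => ε⁻¹ * σ (ε * t)) (𝓝[≠] 0) (𝓝 (c * t)) := by
  have hcomp : HasDerivAt (fun ε : ℝ => σ (ε * t)) (c * t) 0 :=
    hσ.comp_of_eq 0 (hasDerivAt_mul_const t) (zero_mul t).symm
  refine (hasDerivAt_iff_tendsto_slope.mp hcomp).congr fun ε => ?_
  simp [slope_def_field, hσ0, div_eq_inv_mul]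

theorem tendsto_inv_smul_entrywise_smul {σ : ℝ → ℝ} {c : ℝ}
    (hσ : HasDerivAt σ c 0) (hσ0 : σ 0 = 0) {m k : ℕ} (M : Matrix (Fin m) (Fin k) ℝ) :
    Tendsto (fun ε : ℝ => ε⁻¹ • entrywise σ (ε • M)) (𝓝[≠] 0) (𝓝 (c • M)) :=
  tendsto_pi_nhds.mpr fun i => tendsto_pi_nhds.mpr fun j => by
    simpa [entrywise] using hσ.tendsto_inv_mul_comp_mul hσ0 (M i j)

theorem continuous_frobNorm {m k : ℕ} :
    Continuous (frobNorm : Matrix (Fin m) (Fin k) ℝ → ℝ) := by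
  unfold frobNorm
  fun_prop

theorem frobNorm_nonneg {m k : ℕ} (M : Matrix (Fin m) (Fin k) ℝ) : 0 ≤ frobNorm M :=
  Real.sqrt_nonneg _

theorem Esig_le_frobNorm {din dout n r : ℕ} (σ : ℝ → ℝ)
    (X : Matrix (Fin din) (Fin n) ℝ) (Y : Matrix (Fin dout) (Fin n) ℝ)
    (A : Matrix (Fin r) (Fin din) ℝ) (B : Matrix (Fin dout) (Fin r) ℝ) :
    Esig σ X Y r ≤ frobNorm (Y - B * entrywise σ (A * X)) :=
  (ciInf_le ⟨0, by rintro _ ⟨_, rfl⟩; exact Real.iInf_nonneg fun _ => frobNorm_nonneg _⟩ A).trans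
    (ciInf_le ⟨0, by rintro _ ⟨_, rfl⟩; exact frobNorm_nonneg _⟩ B)

theorem tendsto_linearization {σ : ℝ → ℝ} {c : ℝ} (hσ : HasDerivAt σ c 0)
    (hσ0 : σ 0 = 0) (hc : c ≠ 0) {din dout n r : ℕ}
    (X : Matrix (Fin din) (Fin n) ℝ) (A : Matrix (Fin r) (Fin din) ℝ)
    (B : Matrix (Fin dout) (Fin r) ℝ) :
    Tendsto (fun ε : ℝ => ((ε * c)⁻¹ • B) * entrywise σ ((ε • A) * X)) (𝓝[≠] 0)
      (𝓝 (B * A * X)) := by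
  have hrescale : ∀ ε : ℝ, ((ε * c)⁻¹ • B) * entrywise σ ((ε • A) * X)
      = (c⁻¹ • B) * (ε⁻¹ • entrywise σ (ε • (A * X))) := fun ε => by
    simp only [Matrix.smul_mul, Matrix.mul_smul]
    module
  have hlim : (c⁻¹ • B) * (c • (A * X)) = B * A * X := by
    rw [Matrix.mul_smul, Matrix.smul_mul, smul_smul, mul_inv_cancel₀ hc, one_smul,
      Matrix.mul_assoc]
  simp_rw [hrescale, ← hlim]
  exact ((continuous_const.matrix_mul continuous_id).tendsto _).comp
    (tendsto_inv_smul_entrywise_smul hσ hσ0 (A * X))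

/-- Proposition 1: if `σ(0) = 0`, `σ` is differentiable at `0`
and `σ'(0) ≠ 0`, then `E_σ(r) ≤ E_id(r)`. -/
theorem stmt0 {din dout n r : ℕ}
    (X : Matrix (Fin din) (Fin n) ℝ) (Y : Matrix (Fin dout) (Fin n) ℝ)
    (σ : ℝ → ℝ) (hσ0 : σ 0 = 0) (hσdiff : DifferentiableAt ℝ σ 0)
    (hσ' : deriv σ 0 ≠ 0) :
    Esig σ X Y r ≤ Eid X Y r := by
  refine le_ciInf fun A => le_ciInf fun B => ?_
  have hlim := tendsto_linearization hσdiff.hasDerivAt hσ0 hσ' X A B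
  exact ge_of_tendsto ((continuous_frobNorm.tendsto _).comp (tendsto_const_nhds.sub hlim))
    (Eventually.of_forall fun ε => Esig_le_frobNorm σ X Y _ _)

end

end CoLA
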